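/- Let S be a countable regular semigroup each of whose maximal subgroups is finite. Then S is ℵ₀-categorical if and only if, for every n ≥ 1, the restriction of the relation ~_{S,n} to E(S)^n has only finitely many equivalence classes. -/

import Mathlib

/-- Two `n`-tuples of a semigroup are automorphically equivalent if some semigroup
automorphism maps one to the other componentwise. -/
def AutRel (S : Type*) [Semigroup S] {n : ℕ} (a b : Fin n → S) : Prop :=
  ∃ φ : S ≃* S, ∀ k, φ (a k) = b k

/-- A semigroup is ℵ₀-categorical if, for every `n ≥ 1`, the action of its automorphism
group on `n`-tuples has only finitely many orbits. -/
def Aleph0Categorical (S : Type*) [Semigroup S] : Prop :=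
  ∀ n : ℕ, 1 ≤ n → ∃ t : Set (Fin n → S), t.Finite ∧
    ∀ a : Fin n → S, ∃ b ∈ t, AutRel S b a

section Green

variable (S : Type*) [Semigroup S]

/-- Green's relation `R`: equality of principal right ideals `{a} ∪ aS`. -/
def GreenR (a b : S) : Prop :=
  ({a} ∪ {x | ∃ s, x = a * s} : Set S) = ({b} ∪ {x | ∃ s, x = b * s} : Set S)

/-- Green's relation `L`: equality of principal left ideals `{a} ∪ Sa`. -/
def GreenL (a b : S) : Prop :=
  ({a} ∪ {x | ∃ s, x = s * a} : Set S) = ({b} ∪ {x | ∃ s, x = s * b} : Set S)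

/-- Green's relation `H = R ∩ L`. -/
def GreenH (a b : S) : Prop := GreenR S a b ∧ GreenL S a b

end Green

/-!
If `a * x * a = a`, then `a` is `R`-related to the idempotent `a * x` and `L`-related to the
idempotent `x * a`. Automorphisms preserve `R` and `L`, so the orbit of the idempotent `2n`-tuple
`(a * x, x * a)` pins the orbit of the `n`-tuple `a` down to finitely many choices: each nonempty
`R ∩ L` class is an `H`-class, and `y ↦ x * y` maps the `H`-class of `a` injectively into the
maximal subgroup at `x * a`.
-/

section GreenRelations

variable {S T : Type*} [Semigroup S] [Semigroup T]

-- `GreenR S a b` and `GreenL S a b` unfold to equalities of these principal one-sided ideals.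
def principalRightIdeal (a : S) : Set S := {a} ∪ {x | ∃ s, x = a * s}

def principalLeftIdeal (a : S) : Set S := {a} ∪ {x | ∃ s, x = s * a}

lemma principalRightIdeal_subset {a x : S} (h : x ∈ principalRightIdeal a) :
    principalRightIdeal x ⊆ principalRightIdeal a := by
  rintro y (rfl | ⟨t, rfl⟩)
  · exact h
  · rcases h with rfl | ⟨s, rfl⟩
    · exact Or.inr ⟨t, rfl⟩
    · exact Or.inr ⟨s * t, mul_assoc _ _ _⟩

lemma principalLeftIdeal_subset {a x : S} (h : x ∈ principalLeftIdeal a) :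
    principalLeftIdeal x ⊆ principalLeftIdeal a := by
  rintro y (rfl | ⟨t, rfl⟩)
  · exact h
  · rcases h with rfl | ⟨s, rfl⟩
    · exact Or.inr ⟨t, rfl⟩
    · exact Or.inr ⟨t * s, (mul_assoc _ _ _).symm⟩

lemma greenR_iff {a b : S} :
    GreenR S a b ↔ a ∈ principalRightIdeal b ∧ b ∈ principalRightIdeal a := by
  change principalRightIdeal a = principalRightIdeal b ↔ _
  refine ⟨fun h => ⟨h ▸ Or.inl rfl, h ▸ Or.inl rfl⟩, fun ⟨hab, hba⟩ => ?_⟩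
  exact (principalRightIdeal_subset hab).antisymm (principalRightIdeal_subset hba)

lemma greenL_iff {a b : S} :
    GreenL S a b ↔ a ∈ principalLeftIdeal b ∧ b ∈ principalLeftIdeal a := by
  change principalLeftIdeal a = principalLeftIdeal b ↔ _
  refine ⟨fun h => ⟨h ▸ Or.inl rfl, h ▸ Or.inl rfl⟩, fun ⟨hab, hba⟩ => ?_⟩
  exact (principalLeftIdeal_subset hab).antisymm (principalLeftIdeal_subset hba)

lemma greenR_comm {a b : S} : GreenR S a b ↔ GreenR S b a := eq_comm

lemma greenL_comm {a b : S} : GreenL S a b ↔ GreenL S b a := eq_comm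

lemma GreenR.trans {a b c : S} (hab : GreenR S a b) (hbc : GreenR S b c) : GreenR S a c :=
  Eq.trans hab hbc

lemma GreenL.trans {a b c : S} (hab : GreenL S a b) (hbc : GreenL S b c) : GreenL S a c :=
  Eq.trans hab hbc

lemma finite_greenR_inter_greenL (hH : ∀ a : S, {y | GreenH S a y}.Finite) (e f : S) :
    {y | GreenR S e y ∧ GreenL S f y}.Finite := by
  rcases Set.eq_empty_or_nonempty {y | GreenR S e y ∧ GreenL S f y} with h | ⟨y₀, hR₀, hL₀⟩
  · exact h ▸ Set.finite_empty
  · exact (hH y₀).subset fun y ⟨hR, hL⟩ =>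
      ⟨(greenR_comm.1 hR₀).trans hR, (greenL_comm.1 hL₀).trans hL⟩

section Map

variable {F : Type*} [FunLike F S T] [MulHomClass F S T] (f : F)

lemma map_mem_principalRightIdeal {a x : S} (h : x ∈ principalRightIdeal a) :
    f x ∈ principalRightIdeal (f a) := by
  rcases h with rfl | ⟨s, rfl⟩
  · exact Or.inl rfl
  · exact Or.inr ⟨f s, map_mul f a s⟩

lemma map_mem_principalLeftIdeal {a x : S} (h : x ∈ principalLeftIdeal a) :
    f x ∈ principalLeftIdeal (f a) := by
  rcases h with rfl | ⟨s, rfl⟩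
  · exact Or.inl rfl
  · exact Or.inr ⟨f s, map_mul f s a⟩

lemma GreenR.map {a b : S} (h : GreenR S a b) : GreenR T (f a) (f b) :=
  greenR_iff.2 ⟨map_mem_principalRightIdeal f (greenR_iff.1 h).1,
    map_mem_principalRightIdeal f (greenR_iff.1 h).2⟩

lemma GreenL.map {a b : S} (h : GreenL S a b) : GreenL T (f a) (f b) :=
  greenL_iff.2 ⟨map_mem_principalLeftIdeal f (greenL_iff.1 h).1,
    map_mem_principalLeftIdeal f (greenL_iff.1 h).2⟩

end Map

lemma greenR_map_iff (φ : S ≃* T) {a b : S} : GreenR T (φ a) (φ b) ↔ GreenR S a b :=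
  ⟨fun h => by simpa using h.map φ.symm, fun h => h.map φ⟩

lemma greenL_map_iff (φ : S ≃* T) {a b : S} : GreenL T (φ a) (φ b) ↔ GreenL S a b :=
  ⟨fun h => by simpa using h.map φ.symm, fun h => h.map φ⟩

section Regular

variable {a x : S}

lemma isIdempotentElem_mul_right_of_mul_mul (h : a * x * a = a) : IsIdempotentElem (a * x) := by
  rw [IsIdempotentElem, ← mul_assoc, h]

lemma isIdempotentElem_mul_left_of_mul_mul (h : a * x * a = a) : IsIdempotentElem (x * a) := by
  rw [IsIdempotentElem, mul_assoc, ← mul_assoc a, h]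

lemma greenR_mul_right_of_mul_mul (h : a * x * a = a) : GreenR S (a * x) a :=
  greenR_iff.2 ⟨Or.inr ⟨x, rfl⟩, Or.inr ⟨a, h.symm⟩⟩

lemma greenL_mul_left_of_mul_mul (h : a * x * a = a) : GreenL S (x * a) a :=
  greenL_iff.2 ⟨Or.inr ⟨x, rfl⟩, Or.inr ⟨a, by rw [← mul_assoc, h]⟩⟩

lemma mul_mul_of_greenR (h : a * x * a = a) {y : S} (hy : GreenR S a y) : a * (x * y) = y := by
  rcases (greenR_iff.1 hy).2 with rfl | ⟨s, rfl⟩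
  · rw [← mul_assoc, h]
  · rw [← mul_assoc, ← mul_assoc, h]

-- Half of Green's lemma.
lemma GreenH.mul_left_of_mul_mul (h : a * x * a = a) {y : S} (hy : GreenH S a y) :
    GreenH S (x * a) (x * y) := by
  have hxy : a * (x * y) = y := mul_mul_of_greenR h hy.1
  obtain ⟨hR, hL⟩ := hy
  refine ⟨greenR_iff.2 ⟨?_, Or.inr ⟨x * y, by rw [mul_assoc, hxy]⟩⟩, greenL_iff.2 ⟨?_, ?_⟩⟩
  · rcases (greenR_iff.1 hR).1 with rfl | ⟨t, rfl⟩
    · exact Or.inl rfl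
    · exact Or.inr ⟨t, by rw [mul_assoc]⟩
  · rcases (greenL_iff.1 hL).1 with rfl | ⟨u, ha⟩
    · exact Or.inl rfl
    · exact Or.inr ⟨x * u * a, by rw [mul_assoc, hxy, mul_assoc, ← ha]⟩
  · rcases (greenL_iff.1 hL).2 with rfl | ⟨s, rfl⟩
    · exact Or.inl rfl
    · exact Or.inr ⟨x * s * a, by simp only [mul_assoc]; rw [← mul_assoc a x a, h]⟩

lemma finite_greenH (hreg : ∀ a : S, ∃ x : S, a * x * a = a)
    (hfin : ∀ e : S, e * e = e → {b : S | GreenH S e b}.Finite) (a : S) :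
    {y | GreenH S a y}.Finite := by
  obtain ⟨x, h⟩ := hreg a
  refine Set.Finite.of_finite_image (f := (x * ·))
    ((hfin (x * a) (isIdempotentElem_mul_left_of_mul_mul h)).subset ?_) fun y hy z hz hyz => ?_
  · rintro _ ⟨y, hy, rfl⟩
    exact GreenH.mul_left_of_mul_mul h hy
  rw [← mul_mul_of_greenR h hy.1, ← mul_mul_of_greenR h hz.1]
  exact congrArg (a * ·) hyz

end Regular

end GreenRelations

section Orbits

variable {S : Type*} [Semigroup S]

lemma Aleph0Categorical.exists_finite_reps_of_reflect (h : Aleph0Categorical S) {P : S → Prop}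
    (hP : ∀ (φ : S ≃* S) x, P (φ x) → P x) {n : ℕ} (hn : 1 ≤ n) :
    ∃ t : Set (Fin n → S), t.Finite ∧ (∀ b ∈ t, ∀ k, P (b k)) ∧
      ∀ a : Fin n → S, (∀ k, P (a k)) → ∃ b ∈ t, AutRel S b a := by
  obtain ⟨t, ht, hcov⟩ := h n hn
  refine ⟨{b ∈ t | ∀ k, P (b k)}, ht.subset (Set.sep_subset _ _), fun b hb => hb.2, ?_⟩
  intro a ha
  obtain ⟨b, hb, φ, hφ⟩ := hcov a
  exact ⟨b, ⟨hb, fun k => hP φ _ ((hφ k).symm ▸ ha k)⟩, φ, hφ⟩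

lemma exists_finite_reps_of_idempotent_reps (hreg : ∀ a : S, ∃ x : S, a * x * a = a)
    (hRL : ∀ e f : S, {y | GreenR S e y ∧ GreenL S f y}.Finite) {n : ℕ}
    (h : ∃ t : Set (Fin (n + n) → S), t.Finite ∧
      ∀ a : Fin (n + n) → S, (∀ k, a k * a k = a k) → ∃ b ∈ t, AutRel S b a) :
    ∃ t : Set (Fin n → S), t.Finite ∧ ∀ a : Fin n → S, ∃ b ∈ t, AutRel S b a := by
  obtain ⟨t, ht, hcov⟩ := h
  let classes (b : Fin (n + n) → S) : Set (Fin n → S) :=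
    {c | ∀ k, GreenR S (b (Fin.castAdd n k)) (c k) ∧ GreenL S (b (Fin.natAdd n k)) (c k)}
  refine ⟨⋃ b ∈ t, classes b, ht.biUnion fun b _ => Set.Finite.pi' fun k => hRL _ _, fun a => ?_⟩
  choose x hx using fun k => hreg (a k)
  let E := Fin.append (fun k => a k * x k) (fun k => x k * a k)
  have hE_left (k : Fin n) : E (Fin.castAdd n k) = a k * x k := Fin.append_left _ _ k
  have hE_right (k : Fin n) : E (Fin.natAdd n k) = x k * a k := Fin.append_right _ _ k
  have hE : ∀ j, E j * E j = E j := (Fin.forall_fin_add _).2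
    ⟨fun k => hE_left k ▸ isIdempotentElem_mul_right_of_mul_mul (hx k),
     fun k => hE_right k ▸ isIdempotentElem_mul_left_of_mul_mul (hx k)⟩
  obtain ⟨b, hb, φ, hφ⟩ := hcov E hE
  refine ⟨fun k => φ.symm (a k), Set.mem_biUnion hb fun k => ⟨?_, ?_⟩, φ, fun k => by simp⟩
  · rw [← greenR_map_iff φ, hφ, φ.apply_symm_apply, hE_left]
    exact greenR_mul_right_of_mul_mul (hx k)
  · rw [← greenL_map_iff φ, hφ, φ.apply_symm_apply, hE_right]
    exact greenL_mul_left_of_mul_mul (hx k)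

end Orbits

theorem aleph0Categorical_regular_iff_idempotents_general (S : Type*) [Semigroup S]
    (hreg : ∀ a : S, ∃ x : S, a * x * a = a)
    (hfin : ∀ e : S, e * e = e → {b : S | GreenH S e b}.Finite) :
    Aleph0Categorical S ↔
      ∀ n : ℕ, 1 ≤ n → ∃ t : Set (Fin n → S), t.Finite ∧
        (∀ b ∈ t, ∀ k, b k * b k = b k) ∧
        ∀ a : Fin n → S, (∀ k, a k * a k = a k) → ∃ b ∈ t, AutRel S b a := by
  refine ⟨fun h n hn => h.exists_finite_reps_of_reflect (P := fun e => e * e = e) ?_ hn,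
    fun h n hn => ?_⟩
  · exact fun φ e he => φ.injective (by rw [map_mul, he])
  · obtain ⟨t, ht, -, hcov⟩ := h (n + n) (by omega)
    exact exists_finite_reps_of_idempotent_reps hreg
      (finite_greenR_inter_greenL (finite_greenH hreg hfin)) ⟨t, ht, hcov⟩

/-- Let `S` be a countable regular semigroup each of whose maximal subgroups
(`H`-classes of idempotents) is finite.  Then `S` is ℵ₀-categorical iff for every
`n ≥ 1` the restriction of `~_{S,n}` to `E(S)^n` has finitely many classes. -/
theorem aleph0Categorical_regular_iff_idempotents (S : Type*) [Semigroup S] [Countable S]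
    (hreg : ∀ a : S, ∃ x : S, a * x * a = a)
    (hfin : ∀ e : S, e * e = e → {b : S | GreenH S e b}.Finite) :
    Aleph0Categorical S ↔
      ∀ n : ℕ, 1 ≤ n → ∃ t : Set (Fin n → S), t.Finite ∧
        (∀ b ∈ t, ∀ k, b k * b k = b k) ∧
        ∀ a : Fin n → S, (∀ k, a k * a k = a k) → ∃ b ∈ t, AutRel S b a :=
  aleph0Categorical_regular_iff_idempotents_general S hreg hfin
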